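/- arXiv:2103.14143 — 5 statements merged into one kernel-verified Lean document; each statement's English description precedes it below -/
import Mathlib

section
/- Let n ≥ 2, let z ∈ ℝⁿ, and let S be the unit sphere centered at z. Suppose u : ℝⁿ → ℝ is C² on an open neighborhood U of a point p ∈ S, and suppose the Neumann condition ⟨∇u(x), x − z⟩ = 0 holds for every x ∈ S ∩ U. Then the directional derivative of the function x ↦ ‖∇u(x)‖² at p in the direction of the inward unit normal ν = −(p − z) equals 2‖∇u(p)‖²; that is, D(‖∇u‖²)(p)[z − p] = 2‖∇u(p)‖². -/
/-!
By the Neumann condition, `x ↦ ⟪∇u x, x - z⟫` vanishes on the sphere near `p`, and `∇u p` is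
tangent to the sphere there; differentiating along `∇u p` gives
`⟪D(∇u)(p) (∇u p), p - z⟫ + ‖∇u p‖² = 0`. Since `D(‖∇u‖²)(p) v = 2 ⟪∇u p, D(∇u)(p) v⟫` and the
Hessian `D(∇u)(p)` is symmetric, the derivative in the direction `z - p` is
`-2 ⟪D(∇u)(p) (∇u p), p - z⟫ = 2 ‖∇u p‖²`.
-/

open scoped RealInnerProductSpace
open InnerProductSpace Real Filter Topology

section Sphere

variable {E : Type*} [NormedAddCommGroup E] [InnerProductSpace ℝ E]

theorem norm_cos_smul_add_sin_smul {x y : E} (hxy : ⟪x, y⟫ = 0) (hy : ‖y‖ = ‖x‖) (t : ℝ) :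
    ‖cos t • x + sin t • y‖ = ‖x‖ := by
  have hsq : ‖cos t • x + sin t • y‖ ^ 2 = ‖x‖ ^ 2 := by
    rw [norm_add_sq_real, real_inner_smul_left, real_inner_smul_right, hxy, norm_smul, norm_smul,
      hy, Real.norm_eq_abs, Real.norm_eq_abs]
    nlinarith [sin_sq_add_cos_sq t, sq_abs (cos t), sq_abs (sin t)]
  exact (pow_left_inj₀ (norm_nonneg _) (norm_nonneg _) two_ne_zero).1 hsq

theorem hasDerivAt_cos_smul_add_sin_smul (x y : E) :
    HasDerivAt (fun t => cos t • x + sin t • y) y 0 := by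
  have := ((hasDerivAt_cos 0).smul_const x).fun_add ((hasDerivAt_sin 0).smul_const y)
  simpa using this

theorem HasFDerivAt.apply_eq_zero_of_inner_eq_zero {h : E → ℝ} {h' : E →L[ℝ] ℝ} {z p w : E}
    (hh : HasFDerivAt h h' p) (hpz : p ≠ z)
    (hzero : ∀ᶠ x in 𝓝 p, ‖x - z‖ = ‖p - z‖ → h x = 0) (hw : ⟪p - z, w⟫ = 0) : h' w = 0 := by
  rcases eq_or_ne w 0 with rfl | hw0
  · exact map_zero h'
  set c := ‖p - z‖ / ‖w‖
  have hc : c ≠ 0 := div_ne_zero (norm_ne_zero_iff.2 (sub_ne_zero.2 hpz)) (norm_ne_zero_iff.2 hw0)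
  -- the great circle through `p` with velocity `c • w`, a rescaling of `w` to the radius
  set γ : ℝ → E := fun t => z + (Real.cos t • (p - z) + Real.sin t • (c • w))
  have hγ0 : γ 0 = p := by simp [γ]
  have hγ' : HasDerivAt γ (c • w) 0 :=
    (hasDerivAt_cos_smul_add_sin_smul (p - z) (c • w)).const_add z
  have hperp : ⟪p - z, c • w⟫ = 0 := by rw [real_inner_smul_right, hw, mul_zero]
  have hnorm : ‖c • w‖ = ‖p - z‖ := by simp [c, norm_smul, hw0]
  have hγS : ∀ t, ‖γ t - z‖ = ‖p - z‖ := fun t => by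
    simpa [γ] using norm_cos_smul_add_sin_smul hperp hnorm t
  have hcomp : HasDerivAt (h ∘ γ) (h' (c • w)) 0 := by
    rw [← hγ0] at hh
    exact hh.comp_hasDerivAt 0 hγ'
  have hγev : h ∘ γ =ᶠ[𝓝 0] fun _ => 0 := by
    have hγt : Tendsto γ (𝓝 0) (𝓝 p) := hγ0 ▸ hγ'.continuousAt.tendsto
    filter_upwards [hγt.eventually hzero] with t ht using ht (hγS t)
  have : h' (c • w) = 0 := hcomp.unique ((hasDerivAt_const 0 (0 : ℝ)).congr_of_eventuallyEq hγev)
  rwa [map_smul, smul_eq_zero, or_iff_right hc] at this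

theorem HasFDerivAt.inner_apply_sub_eq_neg_norm_sq {g : E → E} {B : E →L[ℝ] E} {z p : E}
    (hg : HasFDerivAt g B p) (hpz : p ≠ z)
    (htan : ∀ᶠ x in 𝓝 p, ‖x - z‖ = ‖p - z‖ → ⟪g x, x - z⟫ = 0) :
    ⟪B (g p), p - z⟫ = -‖g p‖ ^ 2 := by
  have hgp : ⟪p - z, g p⟫ = 0 := real_inner_comm (g p) (p - z) ▸ htan.self_of_nhds rfl
  have hh := hg.inner ℝ ((hasFDerivAt_id p).sub_const z)
  have := hh.apply_eq_zero_of_inner_eq_zero hpz htan hgp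
  simp only [ContinuousLinearMap.comp_apply, ContinuousLinearMap.prod_apply, fderivInnerCLM_apply,
    ContinuousLinearMap.id_apply, id_eq, real_inner_self_eq_norm_sq] at this
  linarith

end Sphere

section Gradient

variable {E : Type*} [NormedAddCommGroup E] [InnerProductSpace ℝ E] [CompleteSpace E]
  {u : E → ℝ} {p : E}

theorem ContDiffAt.gradient {n : WithTop ℕ∞} (hu : ContDiffAt ℝ (n + 1) u p) :
    ContDiffAt ℝ n (gradient u) p :=
  (toDual ℝ E).symm.contDiff.contDiffAt.comp p (hu.fderiv_right le_rfl)

theorem inner_fderiv_gradient_apply (hg : DifferentiableAt ℝ (gradient u) p)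
    (hu : DifferentiableAt ℝ (fderiv ℝ u) p) (v w : E) :
    ⟪fderiv ℝ (gradient u) p v, w⟫ = fderiv ℝ (fderiv ℝ u) p v w := by
  have hfun : (fun x => ⟪gradient u x, w⟫) = fun x => fderiv ℝ u x w :=
    funext fun x => inner_gradient_left
  have := congrArg (fun f => fderiv ℝ f p v) hfun
  simpa only [fderiv_inner_apply ℝ hg (differentiableAt_const w), fderiv_fun_const,
    Pi.zero_apply, zero_apply, inner_zero_right, zero_add,
    fderiv_clm_apply hu (differentiableAt_const w), ContinuousLinearMap.comp_zero,
    add_apply, ContinuousLinearMap.flip_apply] using this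

theorem inner_fderiv_gradient_comm (hu : ContDiffAt ℝ 2 u p) (v w : E) :
    ⟪fderiv ℝ (gradient u) p v, w⟫ = ⟪fderiv ℝ (gradient u) p w, v⟫ := by
  have hg : DifferentiableAt ℝ (gradient u) p := (hu.gradient (n := 1)).differentiableAt one_ne_zero
  have hu' : DifferentiableAt ℝ (fderiv ℝ u) p :=
    (hu.fderiv_right (m := 1) le_rfl).differentiableAt one_ne_zero
  rw [inner_fderiv_gradient_apply hg hu', inner_fderiv_gradient_apply hg hu',
    (hu.isSymmSndFDerivAt (by simp)).eq]

end Gradient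

theorem normal_deriv_grad_sq_on_sphere_general (n : ℕ)
    (z p : EuclideanSpace ℝ (Fin n)) (hp : ‖p - z‖ = 1)
    (U : Set (EuclideanSpace ℝ (Fin n))) (hU : IsOpen U) (hpU : p ∈ U)
    (u : EuclideanSpace ℝ (Fin n) → ℝ) (hu : ContDiffOn ℝ 2 u U)
    (hNeu : ∀ x ∈ U, ‖x - z‖ = 1 → ⟪gradient u x, x - z⟫ = 0) :
    fderiv ℝ (fun x => ‖gradient u x‖ ^ 2) p (z - p) = 2 * ‖gradient u p‖ ^ 2 := by
  have hu2 : ContDiffAt ℝ 2 u p := hu.contDiffAt (hU.mem_nhds hpU)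
  set B := fderiv ℝ (gradient u) p
  have hg : HasFDerivAt (gradient u) B p :=
    ((hu2.gradient (n := 1)).differentiableAt one_ne_zero).hasFDerivAt
  have hpz : p ≠ z := by rintro rfl; simp at hp
  have hrad : ⟪B (gradient u p), p - z⟫ = -‖gradient u p‖ ^ 2 :=
    hg.inner_apply_sub_eq_neg_norm_sq hpz <| by
      filter_upwards [hU.mem_nhds hpU] with x hx hxz using hNeu x hx (hxz.trans hp)
  calc fderiv ℝ (fun x => ‖gradient u x‖ ^ 2) p (z - p)
      = 2 * ⟪gradient u p, B (z - p)⟫ := by simp [hg.norm_sq.fderiv]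
    _ = -2 * ⟪B (gradient u p), p - z⟫ := by
      rw [real_inner_comm, inner_fderiv_gradient_comm hu2, ← neg_sub p z, inner_neg_right]; ring
    _ = 2 * ‖gradient u p‖ ^ 2 := by rw [hrad]; ring

/-- Lemma 2.2: let `S` be the unit sphere centered at `z ∈ ℝⁿ`, let `u` be `C²` on an open
neighborhood `U` of a point `p ∈ S`, and suppose the Neumann condition
`⟨∇u(x), x − z⟩ = 0` holds for all `x ∈ S ∩ U`. Then the derivative of `‖∇u‖²` at `p` in
the direction of the inward unit normal `ν = −(p − z) = z − p` equals `2‖∇u(p)‖²`. -/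
theorem normal_deriv_grad_sq_on_sphere (n : ℕ) (hn : 2 ≤ n)
    (z p : EuclideanSpace ℝ (Fin n)) (hp : ‖p - z‖ = 1)
    (U : Set (EuclideanSpace ℝ (Fin n))) (hU : IsOpen U) (hpU : p ∈ U)
    (u : EuclideanSpace ℝ (Fin n) → ℝ) (hu : ContDiffOn ℝ 2 u U)
    (hNeu : ∀ x ∈ U, ‖x - z‖ = 1 → ⟪gradient u x, x - z⟫ = 0) :
    fderiv ℝ (fun x => ‖gradient u x‖ ^ 2) p (z - p) = 2 * ‖gradient u p‖ ^ 2 :=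
  normal_deriv_grad_sq_on_sphere_general n z p hp U hU hpU u hu hNeu
end

section
/- Let n ≥ 2, let W ⊆ ℝ^{n−1} be open, let f : W → ℝ be C², and let y₀ ∈ W with q = (y₀, f(y₀)) ∈ ℝⁿ. Suppose u : ℝⁿ → ℝ is C² on an open neighborhood of q and satisfies the Neumann condition −Σ_{i=1}^{n−1} ∂ᵢf(y) · ∂ᵢu(y, f(y)) + ∂ₙu(y, f(y)) = 0 for all y in a neighborhood of y₀ in W (i.e., ⟨∇u, ν⟩ = 0 along the graph of f, where ν = (1 + ‖∇f‖²)^{−1/2}(−∇f, 1) is the upward unit normal). Then the derivative of ‖∇u‖² at q in the direction of the unit normal ν(y₀) satisfies ∂_ν(‖∇u‖²)(q) = 2 Σ_{i,j=1}^{n−1} ( ∂ᵢ∂ⱼf(y₀)/√(1 + ‖∇f(y₀)‖²) − ∂ᵢf(y₀)∂ⱼf(y₀) ) ∂ᵢu(q) ∂ⱼu(q) + 2 (∂ₙu(q))². -/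
/-!
Let `G y = (y, f y)` be the graph map, `T = DG(y₀)`, and `ν̃ = (-∇f, 1)` the unnormalised normal.
The Neumann condition at `y₀` says `∇u(q) ⊥ ν̃`, so `∇u(q) = T t` where `t` is the vector of the first
`m` coordinates of `∇u(q)`. Differentiating `Du(G y)(ν̃ y) = 0` along `t` gives
`D²u(q)(T t, ν̃) = D²f(y₀)(t, t)`. Since `∂_ν̃ ‖∇u‖² = 2 D²u(ν̃, ∇u)` and `D²u(q)` is symmetric,
`∂_ν̃ ‖∇u‖²(q) = 2 D²f(y₀)(t, t)`. The stated form follows from `∂ₙu(q) = Σᵢ ∂ᵢf(y₀) ∂ᵢu(q)`.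
-/

open scoped RealInnerProductSpace

/-- The point `(y, f(y)) ∈ ℝ^{m+1}` on the graph of `f : ℝ^m → ℝ`. -/
noncomputable def graphPoint (m : ℕ) (f : EuclideanSpace ℝ (Fin m) → ℝ)
    (y : EuclideanSpace ℝ (Fin m)) : EuclideanSpace ℝ (Fin (m + 1)) :=
  (WithLp.equiv 2 (∀ _ : Fin (m + 1), ℝ)).symm
    (Fin.snoc (α := fun _ => ℝ) (fun j : Fin m => y j) (f y))

/-- The vector `(−v, 1) ∈ ℝ^{m+1}` for `v ∈ ℝ^m` (an un-normalized upward normal). -/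
noncomputable def upNormal (m : ℕ) (v : EuclideanSpace ℝ (Fin m)) :
    EuclideanSpace ℝ (Fin (m + 1)) :=
  (WithLp.equiv 2 (∀ _ : Fin (m + 1), ℝ)).symm
    (Fin.snoc (α := fun _ => ℝ) (fun j : Fin m => -(v j)) (1 : ℝ))

open InnerProductSpace Topology
open scoped InnerProduct

section Gradient

variable {E F : Type*} [NormedAddCommGroup E] [NormedSpace ℝ E]
  [NormedAddCommGroup F] [InnerProductSpace ℝ F] [CompleteSpace F]

lemma fderiv_fderiv_apply {f : E → ℝ} {x : E} (h : DifferentiableAt ℝ (fderiv ℝ f) x) (v w : E) :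
    fderiv ℝ (fun y => fderiv ℝ f y w) x v = fderiv ℝ (fderiv ℝ f) x v w := by
  simp [fderiv_clm_apply h (differentiableAt_const w)]

lemma hasFDerivAt_gradient {u : F → ℝ} {x : F} {B : F →L[ℝ] F →L[ℝ] ℝ}
    (h : HasFDerivAt (fderiv ℝ u) B x) :
    HasFDerivAt (gradient u) ((toDual ℝ F).symm.toLinearIsometry.toContinuousLinearMap ∘L B) x :=
  (toDual ℝ F).symm.toLinearIsometry.toContinuousLinearMap.hasFDerivAt.comp x h

lemma fderiv_norm_sq_gradient_apply {u : F → ℝ} {x : F}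
    (h : DifferentiableAt ℝ (fderiv ℝ u) x) (w : F) :
    fderiv ℝ (fun x => ‖gradient u x‖ ^ 2) x w =
      2 * fderiv ℝ (fderiv ℝ u) x w (gradient u x) := by
  rw [(hasFDerivAt_gradient h.hasFDerivAt).norm_sq.fderiv]
  simp only [smul_apply, ContinuousLinearMap.comp_apply, LinearIsometry.coe_toContinuousLinearMap,
    LinearIsometryEquiv.coe_toLinearIsometry, coe_innerSL_apply, nsmul_eq_mul, Nat.cast_ofNat]
  rw [real_inner_comm, toDual_symm_apply]

end Gradient

section Coordinates

variable {ι : Type*} [Fintype ι] [DecidableEq ι]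

lemma map_eq_sum_smul_single {M : Type*} [NormedAddCommGroup M] [NormedSpace ℝ M]
    (L : EuclideanSpace ℝ ι →L[ℝ] M) (v : EuclideanSpace ℝ ι) :
    L v = ∑ i, v i • L (EuclideanSpace.single i 1) := by
  conv_lhs => rw [← (EuclideanSpace.basisFun ι ℝ).sum_repr v]
  simp

lemma bilin_apply_eq_sum_mul_single (A : EuclideanSpace ℝ ι →L[ℝ] EuclideanSpace ℝ ι →L[ℝ] ℝ)
    (s t : EuclideanSpace ℝ ι) :
    A s t = ∑ i, ∑ j, s i * t j * A (EuclideanSpace.single i 1) (EuclideanSpace.single j 1) := by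
  rw [map_eq_sum_smul_single A s, sum_apply]
  simp_rw [smul_apply, map_eq_sum_smul_single (A (EuclideanSpace.single _ 1)) t, smul_eq_mul,
    Finset.mul_sum, mul_assoc]

lemma gradient_apply_eq_fderiv_single (u : EuclideanSpace ℝ ι → ℝ) (x : EuclideanSpace ℝ ι)
    (i : ι) : gradient u x i = fderiv ℝ u x (EuclideanSpace.single i 1) := by
  rw [← inner_gradient_left, EuclideanSpace.inner_single_right, one_mul, RCLike.conj_to_real]

end Coordinates

section Graph

variable {m : ℕ}

noncomputable def snocZero (m : ℕ) :
    EuclideanSpace ℝ (Fin m) →L[ℝ] EuclideanSpace ℝ (Fin (m + 1)) :=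
  LinearMap.toContinuousLinearMap
    { toFun := fun v => WithLp.toLp 2 (Fin.snoc (α := fun _ => ℝ) (fun j => v j) 0)
      map_add' := fun v w => by ext k; induction k using Fin.lastCases <;> simp
      map_smul' := fun c v => by ext k; induction k using Fin.lastCases <;> simp }

@[simp] lemma snocZero_apply_castSucc (v : EuclideanSpace ℝ (Fin m)) (i : Fin m) :
    snocZero m v i.castSucc = v i := by
  simp [snocZero]

@[simp] lemma snocZero_apply_last (v : EuclideanSpace ℝ (Fin m)) :
    snocZero m v (Fin.last m) = 0 := by
  simp [snocZero]

@[simp] lemma snocZero_single (i : Fin m) (a : ℝ) :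
    snocZero m (EuclideanSpace.single i a) = EuclideanSpace.single i.castSucc a := by
  ext k
  induction k using Fin.lastCases <;> simp [Fin.castSucc_ne_last]

lemma adjoint_snocZero_apply (w : EuclideanSpace ℝ (Fin (m + 1))) (i : Fin m) :
    ((snocZero m)†) w i = w i.castSucc := by
  simpa [EuclideanSpace.inner_single_right] using
    ContinuousLinearMap.adjoint_inner_left (snocZero m) (EuclideanSpace.single i 1) w

lemma graphPoint_eq (f : EuclideanSpace ℝ (Fin m) → ℝ) (y : EuclideanSpace ℝ (Fin m)) :
    graphPoint m f y = snocZero m y + f y • EuclideanSpace.single (Fin.last m) 1 := by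
  ext k
  induction k using Fin.lastCases <;> simp [graphPoint, Fin.castSucc_ne_last]

lemma upNormal_eq (v : EuclideanSpace ℝ (Fin m)) :
    upNormal m v = EuclideanSpace.single (Fin.last m) 1 - snocZero m v := by
  ext k
  induction k using Fin.lastCases <;> simp [upNormal, Fin.castSucc_ne_last]

lemma apply_upNormal (L : EuclideanSpace ℝ (Fin (m + 1)) →L[ℝ] ℝ) (v : EuclideanSpace ℝ (Fin m)) :
    L (upNormal m v) =
      -(∑ i, v i * L (EuclideanSpace.single i.castSucc 1)) +
        L (EuclideanSpace.single (Fin.last m) 1) := by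
  rw [upNormal_eq, map_sub, ← ContinuousLinearMap.comp_apply L (snocZero m),
    map_eq_sum_smul_single (L ∘L snocZero m)]
  simp only [ContinuousLinearMap.comp_apply, snocZero_single, smul_eq_mul]
  ring

lemma hasFDerivAt_graphPoint {f : EuclideanSpace ℝ (Fin m) → ℝ}
    {L : EuclideanSpace ℝ (Fin m) →L[ℝ] ℝ} {y : EuclideanSpace ℝ (Fin m)}
    (hf : HasFDerivAt f L y) :
    HasFDerivAt (graphPoint m f)
      (snocZero m + L.smulRight (EuclideanSpace.single (Fin.last m) 1)) y := by
  simp_rw [funext (graphPoint_eq f)]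
  exact (snocZero m).hasFDerivAt.add (hf.smul_const _)

lemma hasFDerivAt_upNormal_gradient {f : EuclideanSpace ℝ (Fin m) → ℝ}
    {A : EuclideanSpace ℝ (Fin m) →L[ℝ] EuclideanSpace ℝ (Fin m) →L[ℝ] ℝ}
    {y : EuclideanSpace ℝ (Fin m)} (h : HasFDerivAt (fderiv ℝ f) A y) :
    HasFDerivAt (fun y => upNormal m (gradient f y))
      (-(snocZero m ∘L (toDual ℝ _).symm.toLinearIsometry.toContinuousLinearMap ∘L A)) y := by
  simp_rw [upNormal_eq]
  exact ((snocZero m).hasFDerivAt.comp y (hasFDerivAt_gradient h)).const_sub _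

lemma eq_snocZero_add_of_inner_upNormal_eq_zero {w : EuclideanSpace ℝ (Fin (m + 1))}
    {p : EuclideanSpace ℝ (Fin m)} (h : ⟪w, upNormal m p⟫ = 0) :
    w = snocZero m (((snocZero m)†) w) +
      ⟪p, ((snocZero m)†) w⟫ • EuclideanSpace.single (Fin.last m) 1 := by
  rw [upNormal_eq, inner_sub_right, ← ContinuousLinearMap.adjoint_inner_left,
    EuclideanSpace.inner_single_right] at h
  ext k
  induction k using Fin.lastCases with
  | last =>
    simp only [Real.ringHom_apply, one_mul, PiLp.add_apply, snocZero_apply_last, PiLp.smul_apply,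
      PiLp.single_eq_same, smul_eq_mul, mul_one, zero_add] at h ⊢
    linarith [real_inner_comm p (((snocZero m)†) w)]
  | cast i => simp [adjoint_snocZero_apply, Fin.castSucc_ne_last]

theorem fderiv_norm_sq_gradient_upNormal {f : EuclideanSpace ℝ (Fin m) → ℝ}
    {u : EuclideanSpace ℝ (Fin (m + 1)) → ℝ} {y₀ : EuclideanSpace ℝ (Fin m)}
    (hf : ContDiffAt ℝ 2 f y₀) (hu : ContDiffAt ℝ 2 u (graphPoint m f y₀))
    (hN : ∀ᶠ y in 𝓝 y₀, fderiv ℝ u (graphPoint m f y) (upNormal m (gradient f y)) = 0) :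
    fderiv ℝ (fun x => ‖gradient u x‖ ^ 2) (graphPoint m f y₀) (upNormal m (gradient f y₀)) =
      2 * fderiv ℝ (fderiv ℝ f) y₀ (((snocZero m)†) (gradient u (graphPoint m f y₀)))
        (((snocZero m)†) (gradient u (graphPoint m f y₀))) := by
  set q := graphPoint m f y₀
  set t := ((snocZero m)†) (gradient u q)
  set n₀ := upNormal m (gradient f y₀)
  set B := fderiv ℝ (fderiv ℝ u) q
  set A := fderiv ℝ (fderiv ℝ f) y₀
  set T := snocZero m + (fderiv ℝ f y₀).smulRight (EuclideanSpace.single (Fin.last m) 1)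
  have hB : HasFDerivAt (fderiv ℝ u) B q :=
    ((hu.fderiv_right le_rfl).differentiableAt one_ne_zero).hasFDerivAt
  have hA : HasFDerivAt (fderiv ℝ f) A y₀ :=
    ((hf.fderiv_right le_rfl).differentiableAt one_ne_zero).hasFDerivAt
  have hT : HasFDerivAt (graphPoint m f) T y₀ :=
    hasFDerivAt_graphPoint (hf.differentiableAt two_ne_zero).hasFDerivAt
  have htangent : gradient u q = T t := by
    have h := eq_snocZero_add_of_inner_upNormal_eq_zero (w := gradient u q) (p := gradient f y₀)
      (by rw [inner_gradient_left]; exact hN.self_of_nhds)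
    rwa [inner_gradient_left] at h
  have hneumann_deriv : B (T t) n₀ = A t t := by
    have hN' : HasFDerivAt (fun y => fderiv ℝ u (graphPoint m f y) (upNormal m (gradient f y)))
        _ y₀ := (hB.comp y₀ hT).clm_apply (hasFDerivAt_upNormal_gradient hA)
    have h0 := congr($(hN'.unique ((hasFDerivAt_const (0 : ℝ) y₀).congr_of_eventuallyEq hN)) t)
    have hDu : fderiv ℝ u q (snocZero m ((toDual ℝ _).symm (A t))) = A t t := by
      rw [← inner_gradient_left, ← ContinuousLinearMap.adjoint_inner_left, real_inner_comm,
        toDual_symm_apply]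
    simp only [ContinuousLinearMap.comp_neg, add_apply, neg_apply, ContinuousLinearMap.comp_apply,
      LinearIsometry.coe_toContinuousLinearMap, LinearIsometryEquiv.coe_toLinearIsometry,
      ContinuousLinearMap.flip_apply, zero_apply] at h0
    linarith
  rw [fderiv_norm_sq_gradient_apply hB.differentiableAt, hu.isSymmSndFDerivAt (by simp), htangent,
    hneumann_deriv]

end Graph

theorem normal_deriv_grad_sq_on_graph_general (m : ℕ)
    (W : Set (EuclideanSpace ℝ (Fin m))) (hW : IsOpen W)
    (f : EuclideanSpace ℝ (Fin m) → ℝ) (hf : ContDiffOn ℝ 2 f W)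
    (y₀ : EuclideanSpace ℝ (Fin m)) (hy₀ : y₀ ∈ W)
    (u : EuclideanSpace ℝ (Fin (m + 1)) → ℝ)
    (q : EuclideanSpace ℝ (Fin (m + 1))) (hq : q = graphPoint m f y₀)
    (U : Set (EuclideanSpace ℝ (Fin (m + 1)))) (hU : IsOpen U) (hqU : q ∈ U)
    (hu : ContDiffOn ℝ 2 u U)
    (hNeu : ∀ᶠ y in nhdsWithin y₀ W,
      -(∑ i : Fin m, fderiv ℝ f y (EuclideanSpace.single i (1 : ℝ)) *
          fderiv ℝ u (graphPoint m f y) (EuclideanSpace.single (Fin.castSucc i) (1 : ℝ))) +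
        fderiv ℝ u (graphPoint m f y) (EuclideanSpace.single (Fin.last m) (1 : ℝ)) = 0) :
    fderiv ℝ (fun x => ‖gradient u x‖ ^ 2) q
        ((Real.sqrt (1 + ‖gradient f y₀‖ ^ 2))⁻¹ • upNormal m (gradient f y₀)) =
      2 * ∑ i : Fin m, ∑ j : Fin m,
          ((fderiv ℝ (fun y => fderiv ℝ f y (EuclideanSpace.single j (1 : ℝ))) y₀
              (EuclideanSpace.single i (1 : ℝ))) / Real.sqrt (1 + ‖gradient f y₀‖ ^ 2) -
            fderiv ℝ f y₀ (EuclideanSpace.single i (1 : ℝ)) *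
              fderiv ℝ f y₀ (EuclideanSpace.single j (1 : ℝ))) *
          fderiv ℝ u q (EuclideanSpace.single (Fin.castSucc i) (1 : ℝ)) *
          fderiv ℝ u q (EuclideanSpace.single (Fin.castSucc j) (1 : ℝ)) +
        2 * (fderiv ℝ u q (EuclideanSpace.single (Fin.last m) (1 : ℝ))) ^ 2 := by
  subst hq
  have hf₂ : ContDiffAt ℝ 2 f y₀ := hf.contDiffAt (hW.mem_nhds hy₀)
  have hu₂ : ContDiffAt ℝ 2 u (graphPoint m f y₀) := hu.contDiffAt (hU.mem_nhds hqU)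
  have hN : ∀ᶠ y in 𝓝 y₀, fderiv ℝ u (graphPoint m f y) (upNormal m (gradient f y)) = 0 := by
    rw [nhdsWithin_eq_nhds.2 (hW.mem_nhds hy₀)] at hNeu
    simpa only [apply_upNormal, gradient_apply_eq_fderiv_single] using hNeu
  have hlast := hN.self_of_nhds
  rw [apply_upNormal, neg_add_eq_zero] at hlast
  simp only [gradient_apply_eq_fderiv_single] at hlast
  have hD2f := (hf₂.fderiv_right le_rfl).differentiableAt one_ne_zero
  rw [map_smul, smul_eq_mul, fderiv_norm_sq_gradient_upNormal hf₂ hu₂ hN,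
    bilin_apply_eq_sum_mul_single, ← hlast, sq (Finset.sum _ _), Finset.sum_mul_sum]
  simp only [adjoint_snocZero_apply, gradient_apply_eq_fderiv_single, fderiv_fderiv_apply hD2f,
    Finset.mul_sum, ← Finset.sum_add_distrib]
  refine Finset.sum_congr rfl fun i _ => Finset.sum_congr rfl fun j _ => ?_
  ring

/-- The generalized boundary derivative identity (formula (f)) of Section 2 for an inclusion
whose boundary is the graph `xₙ = f(x')`, in dimension `n = m + 1 ≥ 2`.  If `u` is `C²` near
`q = (y₀, f(y₀))` and satisfies the Neumann condition `⟨∇u, ν⟩ = 0` along the graph of `f`,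
for `y` in a neighborhood of `y₀` in `W`, where `ν = (1 + ‖∇f‖²)^{−1/2}(−∇f, 1)` is the
upward unit normal, then
`∂_ν(‖∇u‖²)(q) = 2 Σ_{i,j} (fᵢⱼ/√(1+‖∇f‖²) − fᵢ fⱼ) uᵢ uⱼ + 2 uₙ²` at `q`. -/
theorem normal_deriv_grad_sq_on_graph (m : ℕ) (hm : 1 ≤ m)
    (W : Set (EuclideanSpace ℝ (Fin m))) (hW : IsOpen W)
    (f : EuclideanSpace ℝ (Fin m) → ℝ) (hf : ContDiffOn ℝ 2 f W)
    (y₀ : EuclideanSpace ℝ (Fin m)) (hy₀ : y₀ ∈ W)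
    (u : EuclideanSpace ℝ (Fin (m + 1)) → ℝ)
    (q : EuclideanSpace ℝ (Fin (m + 1))) (hq : q = graphPoint m f y₀)
    (U : Set (EuclideanSpace ℝ (Fin (m + 1)))) (hU : IsOpen U) (hqU : q ∈ U)
    (hu : ContDiffOn ℝ 2 u U)
    (hNeu : ∀ᶠ y in nhdsWithin y₀ W,
      -(∑ i : Fin m, fderiv ℝ f y (EuclideanSpace.single i (1 : ℝ)) *
          fderiv ℝ u (graphPoint m f y) (EuclideanSpace.single (Fin.castSucc i) (1 : ℝ))) +
        fderiv ℝ u (graphPoint m f y) (EuclideanSpace.single (Fin.last m) (1 : ℝ)) = 0) :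
    fderiv ℝ (fun x => ‖gradient u x‖ ^ 2) q
        ((Real.sqrt (1 + ‖gradient f y₀‖ ^ 2))⁻¹ • upNormal m (gradient f y₀)) =
      2 * ∑ i : Fin m, ∑ j : Fin m,
          ((fderiv ℝ (fun y => fderiv ℝ f y (EuclideanSpace.single j (1 : ℝ))) y₀
              (EuclideanSpace.single i (1 : ℝ))) / Real.sqrt (1 + ‖gradient f y₀‖ ^ 2) -
            fderiv ℝ f y₀ (EuclideanSpace.single i (1 : ℝ)) *
              fderiv ℝ f y₀ (EuclideanSpace.single j (1 : ℝ))) *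
          fderiv ℝ u q (EuclideanSpace.single (Fin.castSucc i) (1 : ℝ)) *
          fderiv ℝ u q (EuclideanSpace.single (Fin.castSucc j) (1 : ℝ)) +
        2 * (fderiv ℝ u q (EuclideanSpace.single (Fin.last m) (1 : ℝ))) ^ 2 :=
  normal_deriv_grad_sq_on_graph_general m W hW f hf y₀ hy₀ u q hq U hU hqU hu hNeu
end

section
/- Let n ≥ 2 and ε > 0. Let x ∈ ℝⁿ satisfy ‖x − (1+ε)eₙ‖ = 1 and ‖x‖ ≤ 1/2, and suppose u : ℝⁿ → ℝ is differentiable at x with ⟨∇u(x), x − (1+ε)eₙ⟩ = 0. Then |∂ₙu(x)| ≤ 2 |x'| ‖∇u(x)‖, where |x'| = √(x₁² + ⋯ + x_{n−1}²). -/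
open scoped RealInnerProductSpace

/-!
Write `e = eₙ`, `y = x − (1+ε)e` and `a = xₙ − (1+ε)`, so that `y − a e = x − xₙ e = (x', 0)`.
The Neumann condition `⟨∇u, y⟩ = 0` gives `a ∂ₙu = −⟨∇u, y − a e⟩`, hence
`|a| |∂ₙu| ≤ ‖∇u‖ |x'|` by Cauchy–Schwarz, and `|a| ≥ 1/2` because `xₙ ≤ ‖x‖ ≤ 1/2`.
-/

theorem abs_mul_abs_inner_le_of_inner_eq_zero {E : Type*} [NormedAddCommGroup E]
    [InnerProductSpace ℝ E] {g y : E} (h : ⟪g, y⟫ = 0) (a : ℝ) (e : E) :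
    |a| * |⟪g, e⟫| ≤ ‖g‖ * ‖y - a • e‖ := by
  have hproj : ⟪g, y - a • e⟫ = -(a * ⟪g, e⟫) := by
    rw [inner_sub_right, real_inner_smul_right, h, zero_sub]
  calc |a| * |⟪g, e⟫| = |⟪g, y - a • e⟫| := by rw [hproj, abs_neg, abs_mul]
    _ ≤ ‖g‖ * ‖y - a • e‖ := abs_real_inner_le_norm g _

namespace EuclideanSpace

theorem norm_sub_smul_single_self {ι : Type*} [Fintype ι] [DecidableEq ι]
    (x : EuclideanSpace ℝ ι) (k : ι) :
    ‖x - x k • single k (1 : ℝ)‖ = Real.sqrt (∑ i ∈ Finset.univ.erase k, x i ^ 2) := by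
  rw [norm_eq, ← Finset.add_sum_erase _ _ (Finset.mem_univ k)]
  congr 1
  have hk : ‖(x - x k • single k (1 : ℝ)) k‖ = 0 := by simp
  rw [hk, zero_pow two_ne_zero, zero_add]
  exact Finset.sum_congr rfl fun i hi => by simp [Finset.ne_of_mem_erase hi]

end EuclideanSpace

/-- The pointwise boundary estimate of Corollary 4.2: if `x` lies on the sphere
`∂B⁺ = {x : ‖x − (1+ε)eₙ‖ = 1}` with `‖x‖ ≤ 1/2`, and `u` is differentiable at `x` with
the Neumann condition `⟨∇u(x), x − (1+ε)eₙ⟩ = 0`, then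
`|∂ₙu(x)| ≤ 2 |x'| ‖∇u(x)‖`. -/
theorem neumann_vertical_derivative_bound (n : ℕ) (hn : 2 ≤ n) (ε : ℝ) (hε : 0 < ε)
    (x : EuclideanSpace ℝ (Fin n))
    (hxsmall : ‖x‖ ≤ 1 / 2)
    (u : EuclideanSpace ℝ (Fin n) → ℝ)
    (hNeu : ⟪gradient u x,
      x - (1 + ε) • EuclideanSpace.single (⟨n - 1, by omega⟩ : Fin n) (1 : ℝ)⟫ = 0) :
    |fderiv ℝ u x (EuclideanSpace.single (⟨n - 1, by omega⟩ : Fin n) (1 : ℝ))| ≤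
      2 * Real.sqrt (∑ i ∈ Finset.univ.erase (⟨n - 1, by omega⟩ : Fin n), (x i) ^ 2) *
        ‖gradient u x‖ := by
  set k : Fin n := ⟨n - 1, by omega⟩
  set e := EuclideanSpace.single k (1 : ℝ)
  set a := x k - (1 + ε)
  have hshift : x - (1 + ε) • e - a • e = x - x k • e := by module
  have hkey := abs_mul_abs_inner_le_of_inner_eq_zero hNeu a e
  rw [hshift, EuclideanSpace.norm_sub_smul_single_self, inner_gradient_left] at hkey
  have ha : 1 / 2 ≤ |a| := by
    have hxk : x k ≤ 1 / 2 := (le_abs_self _).trans ((PiLp.norm_apply_le x k).trans hxsmall)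
    rw [abs_of_neg (by linarith)]
    linarith
  nlinarith [abs_nonneg (fderiv ℝ u x e)]
end

section
/- Let b > 0, let γ ∈ (0,1), let y > 0 and let ε ≥ 0. Then (b(ε + y/2)² + y²)^{−γ/2} · (ε + y/2) ≥ (1/2) · (1 + b/4)^{−γ/2} · y^{1−γ}, with equality when ε = 0. -/
/-- The elementary inequality (3.13): for `b > 0`, `γ ∈ (0,1)`, `y > 0` and `ε ≥ 0`,
`(b(ε + y/2)² + y²)^{−γ/2} (ε + y/2) ≥ (1/2)(1 + b/4)^{−γ/2} y^{1−γ}`,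
with equality when `ε = 0`. -/
theorem elementary_inequality (b γ y ε : ℝ) (hb : 0 < b) (hγ0 : 0 < γ) (hγ1 : γ < 1)
    (hy : 0 < y) (hε : 0 ≤ ε) :
    (1 / 2) * (1 + b / 4) ^ (-γ / 2) * y ^ (1 - γ) ≤
        (b * (ε + y / 2) ^ 2 + y ^ 2) ^ (-γ / 2) * (ε + y / 2) ∧
      (b * (0 + y / 2) ^ 2 + y ^ 2) ^ (-γ / 2) * (0 + y / 2) =
        (1 / 2) * (1 + b / 4) ^ (-γ / 2) * y ^ (1 - γ) := by
  have hyg : y ^ (1 - γ) = y * y ^ (-γ) := by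
    rw [show (1 : ℝ) - γ = 1 + -γ by ring, Real.rpow_add hy, Real.rpow_one]
  -- equality part
  have heq : (b * (0 + y / 2) ^ 2 + y ^ 2) ^ (-γ / 2) * (0 + y / 2) =
      (1 / 2) * (1 + b / 4) ^ (-γ / 2) * y ^ (1 - γ) := by
    have h1 : b * (0 + y / 2) ^ 2 + y ^ 2 = y ^ 2 * (1 + b / 4) := by ring
    rw [h1, Real.mul_rpow (by positivity) (by positivity)]
    have h2 : (y ^ 2 : ℝ) ^ (-γ / 2) = y ^ (-γ) := by
      rw [← Real.rpow_natCast y 2, ← Real.rpow_mul hy.le]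
      congr 1; ring
    rw [h2, hyg]
    ring
  refine ⟨?_, heq⟩
  -- key factorization
  have key : ∀ t : ℝ, 0 < t →
      (b * t ^ 2 + y ^ 2) ^ (-γ / 2) * t = t ^ (1 - γ) * (b + (y / t) ^ 2) ^ (-γ / 2) := by
    intro t ht
    have h1 : b * t ^ 2 + y ^ 2 = t ^ 2 * (b + (y / t) ^ 2) := by
      field_simp
    rw [h1, Real.mul_rpow (by positivity) (by positivity)]
    have h2 : (t ^ 2 : ℝ) ^ (-γ / 2) = t ^ (-γ) := by
      rw [← Real.rpow_natCast t 2, ← Real.rpow_mul ht.le]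
      congr 1; ring
    have h3 : t ^ (1 - γ) = t * t ^ (-γ) := by
      rw [show (1 : ℝ) - γ = 1 + -γ by ring, Real.rpow_add ht, Real.rpow_one]
    rw [h2, h3]; ring
  have hs0 : 0 < ε + y / 2 := by positivity
  have hhalf : 0 < y / 2 := by positivity
  -- rewrite both sides via key
  have hL : (1 / 2 : ℝ) * (1 + b / 4) ^ (-γ / 2) * y ^ (1 - γ) =
      (y / 2) ^ (1 - γ) * (b + (y / (y / 2)) ^ 2) ^ (-γ / 2) := by
    rw [← key (y / 2) hhalf, ← heq]; ring_nf
  rw [hL, key (ε + y / 2) hs0]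
  have hdiv : y / (ε + y / 2) ≤ 2 := by
    rw [div_le_iff₀ hs0]; linarith
  have hdiv2 : (y / (ε + y / 2)) ^ 2 ≤ (y / (y / 2)) ^ 2 := by
    have : y / (y / 2) = 2 := by field_simp
    rw [this]
    have h0 : 0 ≤ y / (ε + y / 2) := by positivity
    nlinarith
  apply mul_le_mul
  · exact Real.rpow_le_rpow hhalf.le (by linarith) (by linarith)
  · apply Real.rpow_le_rpow_of_nonpos (by positivity) (by linarith) (by linarith)
  · positivity
  · positivity
end

section
/- Let n ≥ 2 be an integer and let H : Fin n → Fin n → ℝ be a symmetric matrix (H i j = H j i for all i, j) with zero trace (Σᵢ H i i = 0). Then for every index k, Σⱼ (H k j)² ≤ ((n−1)/n) · Σᵢ Σⱼ (H i j)². -/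
/-- Inequality (3.18): if `H` is a symmetric trace-free `n × n` real matrix (`n ≥ 2`), then
for every row index `k`, `Σⱼ (H k j)² ≤ ((n−1)/n) Σᵢ Σⱼ (H i j)²`. -/
theorem row_sq_sum_le_of_symm_traceless (n : ℕ) (hn : 2 ≤ n) (H : Fin n → Fin n → ℝ)
    (hsymm : ∀ i j, H i j = H j i) (htrace : ∑ i, H i i = 0) (k : Fin n) :
    ∑ j, (H k j) ^ 2 ≤ (((n : ℝ) - 1) / n) * ∑ i, ∑ j, (H i j) ^ 2 := by
  have hn' : (2 : ℝ) ≤ n := by exact_mod_cast hn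
  set s := Finset.univ.erase k with hs
  set a := (H k k) ^ 2 with ha
  set b := ∑ j ∈ s, (H k j) ^ 2 with hb
  set c := ∑ i ∈ s, (H i i) ^ 2 with hc
  set T := ∑ i, ∑ j, (H i j) ^ 2 with hT
  have hb0 : 0 ≤ b := Finset.sum_nonneg fun _ _ => sq_nonneg _
  have hc0 : 0 ≤ c := Finset.sum_nonneg fun _ _ => sq_nonneg _
  have hrow : ∑ j, (H k j) ^ 2 = a + b :=
    (Finset.add_sum_erase _ _ (Finset.mem_univ k)).symm
  have hcard : (s.card : ℝ) = (n : ℝ) - 1 := by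
    rw [hs, Finset.card_erase_of_mem (Finset.mem_univ k)]
    simp only [Finset.card_univ, Fintype.card_fin]
    have : 1 ≤ n := by omega
    push_cast [Nat.cast_sub this]
    ring
  have hkk : H k k = -∑ i ∈ s, H i i := by
    have := htrace
    rw [← Finset.add_sum_erase _ _ (Finset.mem_univ k)] at this
    linarith
  have hac : a ≤ ((n : ℝ) - 1) * c := by
    have h1 : (∑ i ∈ s, H i i) ^ 2 ≤ s.card * ∑ i ∈ s, (H i i) ^ 2 :=
      sq_sum_le_card_mul_sum_sq
    rw [ha, hkk, neg_sq]
    calc (∑ i ∈ s, H i i) ^ 2 ≤ (s.card : ℝ) * c := h1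
      _ = ((n : ℝ) - 1) * c := by rw [hcard]
  -- b = ∑_{i≠k} (H i k)^2
  have hbcol : b = ∑ i ∈ s, (H i k) ^ 2 := by
    apply Finset.sum_congr rfl
    intro i _
    rw [hsymm]
  have hTsplit : T = (a + b) + ∑ i ∈ s, ∑ j, (H i j) ^ 2 := by
    rw [hT, ← Finset.add_sum_erase _ _ (Finset.mem_univ k), hrow]
  have hinner : ∀ i ∈ s, (H i i) ^ 2 + (H i k) ^ 2 ≤ ∑ j, (H i j) ^ 2 := by
    intro i hi
    have hik : i ≠ k := Finset.ne_of_mem_erase hi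
    have : (H i i) ^ 2 + (H i k) ^ 2 = ∑ j ∈ {i, k}, (H i j) ^ 2 := by
      rw [Finset.sum_pair hik]
    rw [this]
    apply Finset.sum_le_sum_of_subset_of_nonneg (Finset.subset_univ _)
    intro j _ _
    exact sq_nonneg _
  have hTlb : a + 2 * b + c ≤ T := by
    have h2 : ∑ i ∈ s, ((H i i) ^ 2 + (H i k) ^ 2) ≤ ∑ i ∈ s, ∑ j, (H i j) ^ 2 :=
      Finset.sum_le_sum hinner
    rw [Finset.sum_add_distrib, ← hc, ← hbcol] at h2
    linarith [hTsplit.ge, hTsplit.le]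
  have hnpos : (0 : ℝ) < n := by linarith
  rw [hrow, div_mul_eq_mul_div, le_div_iff₀ hnpos]
  nlinarith [mul_le_mul_of_nonneg_left hTlb (by linarith : (0:ℝ) ≤ (n:ℝ) - 1)]
end
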